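/- arXiv:1707.02005 — 3 statements merged into one kernel-verified Lean document; each statement's English description precedes it below -/
import Mathlib

section
/- Let \(V_\ell : [0,\infty) \to [0,2]\), \(\ell \ge 1\), be measurable functions with \(V_\ell(0) = 0\), and suppose there is a constant \(K \ge 0\) such that \(V_1(t) \le K \int_0^t (V_1(s) + V_2(s))\,ds\) and \(V_\ell(t) \le K \int_0^t (V_{\ell-1}(s) + V_\ell(s) + V_{\ell+1}(s))\,ds\) for all \(\ell \ge 2\) and \(t \ge 0\). Then \(V_\ell(t) = 0\) for all \(\ell \ge 1\) and \(t \ge 0\). -/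
/-- Countable system of coupled Gronwall inequalities: if `V_ℓ : [0,∞) → [0,2]`, `ℓ ≥ 1`,
are measurable with `V_ℓ(0) = 0`, and for some `K ≥ 0`,
`V_1(t) ≤ K ∫_0^t (V_1 + V_2)` and `V_ℓ(t) ≤ K ∫_0^t (V_{ℓ-1} + V_ℓ + V_{ℓ+1})` for `ℓ ≥ 2`,
then all `V_ℓ` vanish on `[0,∞)`. -/
theorem coupled_gronwall_vanish (V : ℕ → ℝ → ℝ)
    (hmeas : ∀ ℓ, 1 ≤ ℓ → Measurable (V ℓ))
    (hbd : ∀ ℓ, 1 ≤ ℓ → ∀ t : ℝ, 0 ≤ t → 0 ≤ V ℓ t ∧ V ℓ t ≤ 2)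
    (h0 : ∀ ℓ, 1 ≤ ℓ → V ℓ 0 = 0)
    (K : ℝ) (hK : 0 ≤ K)
    (h1 : ∀ t : ℝ, 0 ≤ t → V 1 t ≤ K * ∫ s in (0:ℝ)..t, (V 1 s + V 2 s))
    (hl : ∀ ℓ, 2 ≤ ℓ → ∀ t : ℝ, 0 ≤ t →
      V ℓ t ≤ K * ∫ s in (0:ℝ)..t, (V (ℓ - 1) s + V ℓ s + V (ℓ + 1) s)) :
    ∀ ℓ, 1 ≤ ℓ → ∀ t : ℝ, 0 ≤ t → V ℓ t = 0 := by
  -- integrabilité of each V m on [0,t]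
  have hint : ∀ m, 1 ≤ m → ∀ t : ℝ, 0 ≤ t → IntervalIntegrable (V m) MeasureTheory.volume 0 t := by
    intro m hm t ht
    rw [intervalIntegrable_iff]
    apply MeasureTheory.Measure.integrableOn_of_bounded (M := 2)
    · exact (measure_Ioc_lt_top).ne
    · exact (hmeas m hm).aestronglyMeasurable
    · refine MeasureTheory.ae_restrict_of_forall_mem measurableSet_uIoc ?_
      intro x hx
      rw [Set.uIoc_of_le ht] at hx
      have h := hbd m hm x (le_of_lt hx.1)
      rw [Real.norm_eq_abs, abs_of_nonneg h.1]
      exact h.2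
  -- key iterated bound
  have key : ∀ n : ℕ, ∀ ℓ, 1 ≤ ℓ → ∀ t : ℝ, 0 ≤ t →
      V ℓ t ≤ 2 * (3 * K) ^ n * t ^ n / (Nat.factorial n) := by
    intro n
    induction n with
    | zero =>
      intro ℓ hℓ t ht
      simpa using (hbd ℓ hℓ t ht).2
    | succ n IH =>
      -- general step: bound K * ∫ g when g ≤ 3 * B pointwise
      have step : ∀ (g : ℝ → ℝ) (t : ℝ), 0 ≤ t →
          IntervalIntegrable g MeasureTheory.volume 0 t →
          (∀ s ∈ Set.Icc (0:ℝ) t, g s ≤ 3 * (2 * (3 * K) ^ n * s ^ n / (Nat.factorial n))) →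
          K * ∫ s in (0:ℝ)..t, g s ≤ 2 * (3 * K) ^ (n + 1) * t ^ (n + 1) / (Nat.factorial (n+1)) := by
        intro g t ht hgint hgle
        have hBint : IntervalIntegrable (fun s => 3 * (2 * (3 * K) ^ n * s ^ n / (Nat.factorial n)))
            MeasureTheory.volume 0 t := by
          apply Continuous.intervalIntegrable
          continuity
        have hmono : (∫ s in (0:ℝ)..t, g s) ≤
            ∫ s in (0:ℝ)..t, 3 * (2 * (3 * K) ^ n * s ^ n / (Nat.factorial n)) := by
          apply intervalIntegral.integral_mono_on ht hgint hBint hgle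
        have hBval : (∫ s in (0:ℝ)..t, 3 * (2 * (3 * K) ^ n * s ^ n / (Nat.factorial n))) =
            3 * (2 * (3 * K) ^ n / (Nat.factorial n)) * (t ^ (n + 1) / (n + 1)) := by
          have : (fun s : ℝ => 3 * (2 * (3 * K) ^ n * s ^ n / (Nat.factorial n))) =
              fun s : ℝ => (3 * (2 * (3 * K) ^ n / (Nat.factorial n))) * s ^ n := by
            funext s; ring
          rw [this, intervalIntegral.integral_const_mul, integral_pow]
          ring
        calc K * ∫ s in (0:ℝ)..t, g s
            ≤ K * (3 * (2 * (3 * K) ^ n / (Nat.factorial n)) * (t ^ (n + 1) / (n + 1))) := by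
              rw [← hBval]; exact mul_le_mul_of_nonneg_left hmono hK
          _ = 2 * (3 * K) ^ (n + 1) * t ^ (n + 1) / (Nat.factorial (n+1)) := by
              rw [Nat.factorial_succ]
              push_cast
              field_simp
              ring
      intro ℓ hℓ t ht
      rcases eq_or_lt_of_le hℓ with hℓ1 | hℓ2
      · -- ℓ = 1
        rw [← hℓ1]
        refine le_trans (h1 t ht) (step _ t ht ?_ ?_)
        · exact (hint 1 le_rfl t ht).add (hint 2 (by norm_num) t ht)
        · intro s hs
          have b1 := IH 1 le_rfl s hs.1
          have b2 := IH 2 (by norm_num) s hs.1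
          linarith [div_nonneg (mul_nonneg (mul_nonneg (by norm_num : (0:ℝ) ≤ 2)
            (pow_nonneg (by linarith : (0:ℝ) ≤ 3 * K) n)) (pow_nonneg hs.1 n))
            (Nat.cast_nonneg ((Nat.factorial n)) : (0:ℝ) ≤ (Nat.factorial n))]
      · -- ℓ ≥ 2
        have hℓ2' : 2 ≤ ℓ := hℓ2
        refine le_trans (hl ℓ hℓ2' t ht) (step _ t ht ?_ ?_)
        · exact ((hint (ℓ - 1) (by omega) t ht).add (hint ℓ (by omega) t ht)).add
            (hint (ℓ + 1) (by omega) t ht)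
        · intro s hs
          have b1 := IH (ℓ - 1) (by omega) s hs.1
          have b2 := IH ℓ (by omega) s hs.1
          have b3 := IH (ℓ + 1) (by omega) s hs.1
          linarith
  -- pass to the limit
  intro ℓ hℓ t ht
  have hle : V ℓ t ≤ 0 := by
    have htend : Filter.Tendsto (fun n : ℕ => 2 * (3 * K) ^ n * t ^ n / (Nat.factorial n))
        Filter.atTop (nhds 0) := by
      have h := FloorSemiring.tendsto_pow_div_factorial_atTop (3 * K * t)
      have : (fun n : ℕ => 2 * (3 * K) ^ n * t ^ n / (Nat.factorial n)) =
          fun n : ℕ => 2 * ((3 * K * t) ^ n / (Nat.factorial n)) := by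
        funext n; rw [mul_pow]; ring
      rw [this]
      simpa using h.const_mul 2
    exact ge_of_tendsto' htend (fun n => key n ℓ hℓ t ht)
  exact le_antisymm hle (hbd ℓ hℓ t ht).1
end

section
/- Let \(V_\ell : [0,\infty) \to [0,2]\), \(\ell \ge 1\), satisfy the hypotheses of the coupled Gronwall system with constant \(K\), and define \(V(t) = \sum_{\ell=1}^{\infty} 2^{-\ell} V_\ell(t)\). Then \(V(t) \le 12 K \int_0^t V(s)\,ds\) for all \(t \ge 0\). -/
open MeasureTheory Set
set_option maxHeartbeats 1000000


lemma cg_intInt {t : ℝ} (ht : 0 ≤ t) {f : ℝ → ℝ}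
    (hf : AEStronglyMeasurable f (volume.restrict (Set.Ioc (0:ℝ) t))) {C : ℝ}
    (hC : ∀ s ∈ Set.Ioc (0:ℝ) t, ‖f s‖ ≤ C) : IntervalIntegrable f volume 0 t := by
  rw [intervalIntegrable_iff_integrableOn_Ioc_of_le ht]
  haveI : IsFiniteMeasure (volume.restrict (Set.Ioc (0:ℝ) t)) :=
    ⟨by rw [Measure.restrict_apply_univ]; exact measure_Ioc_lt_top⟩
  exact ⟨hf, HasFiniteIntegral.of_bounded ((ae_restrict_iff' measurableSet_Ioc).2 (ae_of_all _ hC))⟩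



/-- Weighted-sum estimate in the coupled Gronwall system: if `V_ℓ : [0,∞) → [0,2]` satisfy
`V_1(t) ≤ 3K ∫_0^t (V_1+V_2)` and `V_ℓ(t) ≤ 3K ∫_0^t (V_{ℓ-1}+V_ℓ+V_{ℓ+1})` for `ℓ ≥ 2`,
then the weighted sum `V(t) = ∑_{ℓ≥1} 2^{-ℓ} V_ℓ(t)` satisfies
`V(t) ≤ 12 K ∫_0^t V(s) ds` for all `t ≥ 0`. -/
theorem coupled_gronwall_weighted_sum (V : ℕ → ℝ → ℝ)
    (hmeas : ∀ ℓ, 1 ≤ ℓ → Measurable (V ℓ))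
    (hbd : ∀ ℓ, 1 ≤ ℓ → ∀ t : ℝ, 0 ≤ t → 0 ≤ V ℓ t ∧ V ℓ t ≤ 2)
    (K : ℝ) (hK : 0 ≤ K)
    (h1 : ∀ t : ℝ, 0 ≤ t → V 1 t ≤ 3 * K * ∫ s in (0:ℝ)..t, (V 1 s + V 2 s))
    (hl : ∀ ℓ, 2 ≤ ℓ → ∀ t : ℝ, 0 ≤ t →
      V ℓ t ≤ 3 * K * ∫ s in (0:ℝ)..t, (V (ℓ - 1) s + V ℓ s + V (ℓ + 1) s)) :
    ∀ t : ℝ, 0 ≤ t →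
      (∑' ℓ : ℕ, (2:ℝ)⁻¹ ^ (ℓ + 1) * V (ℓ + 1) t)
        ≤ 12 * K * ∫ s in (0:ℝ)..t, (∑' ℓ : ℕ, (2:ℝ)⁻¹ ^ (ℓ + 1) * V (ℓ + 1) s) := by
  intro t ht
  -- notation
  set W : ℕ → ℝ → ℝ := fun ℓ s => (2:ℝ)⁻¹ ^ (ℓ + 1) * V (ℓ + 1) s with hWdef
  set S : ℝ → ℝ := fun s => ∑' ℓ : ℕ, W ℓ s with hSdef
  show S t ≤ 12 * K * ∫ s in (0:ℝ)..t, S s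
  set g : ℕ → ℝ → ℝ := fun ℓ s =>
    (2:ℝ)⁻¹ ^ (ℓ + 1) * ((if ℓ = 0 then 0 else V ℓ s) + V (ℓ + 1) s + V (ℓ + 2) s) with hgdef
  have hVnn : ∀ k, 1 ≤ k → ∀ s : ℝ, 0 ≤ s → 0 ≤ V k s := fun k hk s hs => (hbd k hk s hs).1
  have hVle : ∀ k, 1 ≤ k → ∀ s : ℝ, 0 ≤ s → V k s ≤ 2 := fun k hk s hs => (hbd k hk s hs).2
  have hpow : ∀ ℓ : ℕ, (0:ℝ) ≤ (2:ℝ)⁻¹ ^ (ℓ + 1) := fun ℓ => by positivity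
  have hWnn : ∀ ℓ (s : ℝ), 0 ≤ s → 0 ≤ W ℓ s := fun ℓ s hs =>
    mul_nonneg (hpow ℓ) (hVnn (ℓ+1) (by omega) s hs)
  have hWle : ∀ ℓ (s : ℝ), 0 ≤ s → W ℓ s ≤ 2 * (2:ℝ)⁻¹ ^ (ℓ + 1) := by
    intro ℓ s hs
    have := hVle (ℓ+1) (by omega) s hs
    calc W ℓ s ≤ (2:ℝ)⁻¹ ^ (ℓ + 1) * 2 := by
          exact mul_le_mul_of_nonneg_left this (hpow ℓ)
      _ = 2 * (2:ℝ)⁻¹ ^ (ℓ + 1) := by ring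
  have hgeo : Summable (fun ℓ : ℕ => (2:ℝ)⁻¹ ^ (ℓ + 1)) := by
    have h := summable_geometric_of_lt_one (r := (2:ℝ)⁻¹) (by norm_num) (by norm_num)
    simpa [pow_succ] using h.mul_right 2⁻¹
  have hsumW : ∀ s : ℝ, 0 ≤ s → Summable (fun ℓ => W ℓ s) := fun s hs =>
    Summable.of_nonneg_of_le (fun ℓ => hWnn ℓ s hs) (fun ℓ => hWle ℓ s hs) (hgeo.mul_left 2)
  have hgnn : ∀ ℓ (s : ℝ), 0 ≤ s → 0 ≤ g ℓ s := by
    intro ℓ s hs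
    have h1' : (0:ℝ) ≤ (if ℓ = 0 then 0 else V ℓ s) := by
      split
      · exact le_refl 0
      · exact hVnn ℓ (by omega) s hs
    have h2' := hVnn (ℓ+1) (by omega) s hs
    have h3' := hVnn (ℓ+2) (by omega) s hs
    exact mul_nonneg (hpow ℓ) (by linarith)
  have hgle : ∀ ℓ (s : ℝ), 0 ≤ s → g ℓ s ≤ 6 * (2:ℝ)⁻¹ ^ (ℓ + 1) := by
    intro ℓ s hs
    have hb : (if ℓ = 0 then (0:ℝ) else V ℓ s) ≤ 2 := by
      split
      · norm_num
      · exact hVle ℓ (by omega) s hs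
    have h2 := hVle (ℓ+1) (by omega) s hs
    have h3 := hVle (ℓ+2) (by omega) s hs
    calc g ℓ s ≤ (2:ℝ)⁻¹ ^ (ℓ + 1) * 6 := mul_le_mul_of_nonneg_left (by linarith) (hpow ℓ)
      _ = 6 * (2:ℝ)⁻¹ ^ (ℓ + 1) := by ring
  have hsumg : ∀ s : ℝ, 0 ≤ s → Summable (fun ℓ => g ℓ s) := fun s hs =>
    Summable.of_nonneg_of_le (fun ℓ => hgnn ℓ s hs) (fun ℓ => hgle ℓ s hs) (hgeo.mul_left 6)
  -- pointwise bound ∑ g ≤ (7/2) S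
  have hSnn : ∀ s : ℝ, 0 ≤ s → 0 ≤ S s := fun s hs => tsum_nonneg (fun ℓ => hWnn ℓ s hs)
  have hgS : ∀ s : ℝ, 0 ≤ s → (∑' ℓ : ℕ, g ℓ s) ≤ 7/2 * S s := by
    intro s hs
    set a : ℕ → ℝ := fun ℓ => (2:ℝ)⁻¹ ^ (ℓ + 1) * (if ℓ = 0 then 0 else V ℓ s) with hadef
    set c : ℕ → ℝ := fun ℓ => (2:ℝ)⁻¹ ^ (ℓ + 1) * V (ℓ + 2) s with hcdef
    have hann : ∀ ℓ, 0 ≤ a ℓ := by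
      intro ℓ; apply mul_nonneg (hpow ℓ); split
      · exact le_refl 0
      · exact hVnn ℓ (by omega) s hs
    have hale : ∀ ℓ, a ℓ ≤ 2 * (2:ℝ)⁻¹ ^ (ℓ + 1) := by
      intro ℓ
      have hb : (if ℓ = 0 then (0:ℝ) else V ℓ s) ≤ 2 := by
        split
        · norm_num
        · exact hVle ℓ (by omega) s hs
      calc a ℓ ≤ (2:ℝ)⁻¹ ^ (ℓ+1) * 2 := mul_le_mul_of_nonneg_left hb (hpow ℓ)
        _ = 2 * (2:ℝ)⁻¹ ^ (ℓ+1) := by ring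
    have hsa : Summable a := Summable.of_nonneg_of_le hann hale (hgeo.mul_left 2)
    have hcnn : ∀ ℓ, 0 ≤ c ℓ := fun ℓ => mul_nonneg (hpow ℓ) (hVnn (ℓ+2) (by omega) s hs)
    have hcle : ∀ ℓ, c ℓ ≤ 2 * (2:ℝ)⁻¹ ^ (ℓ + 1) := by
      intro ℓ
      calc c ℓ ≤ (2:ℝ)⁻¹ ^ (ℓ+1) * 2 :=
            mul_le_mul_of_nonneg_left (hVle (ℓ+2) (by omega) s hs) (hpow ℓ)
        _ = 2 * (2:ℝ)⁻¹ ^ (ℓ+1) := by ring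
    have hsc : Summable c := Summable.of_nonneg_of_le hcnn hcle (hgeo.mul_left 2)
    have hsb : Summable (fun ℓ => W ℓ s) := hsumW s hs
    have hdecomp : ∀ ℓ, g ℓ s = a ℓ + W ℓ s + c ℓ := by
      intro ℓ; simp only [hgdef, hadef, hcdef, hWdef]; ring
    have htsum : (∑' ℓ : ℕ, g ℓ s) = (∑' ℓ, a ℓ) + (∑' ℓ, W ℓ s) + (∑' ℓ, c ℓ) := by
      rw [show (fun ℓ => g ℓ s) = fun ℓ => a ℓ + W ℓ s + c ℓ from funext hdecomp]
      rw [Summable.tsum_add (hsa.add hsb) hsc, Summable.tsum_add hsa hsb]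
    -- a-part
    have ha : (∑' ℓ, a ℓ) = 2⁻¹ * S s := by
      rw [Summable.tsum_eq_zero_add hsa]
      have h0 : a 0 = 0 := by simp [hadef]
      have hsucc : ∀ n : ℕ, a (n + 1) = 2⁻¹ * W n s := by
        intro n; simp only [hadef, hWdef]
        have : (n + 1 : ℕ) ≠ 0 := Nat.succ_ne_zero n
        simp [this, pow_succ]
        try ring
      rw [h0, zero_add]
      calc (∑' n : ℕ, a (n+1)) = ∑' n : ℕ, 2⁻¹ * W n s := tsum_congr hsucc
        _ = 2⁻¹ * S s := by rw [tsum_mul_left]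
    -- c-part
    have hc : (∑' ℓ, c ℓ) ≤ 2 * S s := by
      have hcw : ∀ ℓ, c ℓ = 2 * W (ℓ + 1) s := by
        intro ℓ; simp only [hcdef, hWdef]
        rw [show ℓ + 1 + 1 = ℓ + 2 from rfl]; rw [pow_succ]; ring
      have hsb' : Summable (fun ℓ => W (ℓ + 1) s) := (summable_nat_add_iff 1).2 hsb
      calc (∑' ℓ, c ℓ) = ∑' ℓ, 2 * W (ℓ + 1) s := tsum_congr hcw
        _ = 2 * ∑' ℓ, W (ℓ + 1) s := tsum_mul_left
        _ ≤ 2 * S s := by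
            have : S s = W 0 s + ∑' ℓ, W (ℓ + 1) s := Summable.tsum_eq_zero_add hsb
            have h0 := hWnn 0 s hs
            linarith
    have hWt0 : (∑' ℓ, W ℓ s) = S s := rfl
    rw [htsum, ha, hWt0]
    linarith
  -- per-level estimate
  have hWt : ∀ ℓ : ℕ, W ℓ t ≤ 3 * K * ∫ s in (0:ℝ)..t, g ℓ s := by
    intro ℓ
    cases ℓ with
    | zero =>
        have hV1 := h1 t ht
        have hg0 : ∀ s : ℝ, g 0 s = 2⁻¹ * (V 1 s + V 2 s) := by
          intro s; simp [hgdef]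
          try ring
        have : (∫ s in (0:ℝ)..t, g 0 s) = 2⁻¹ * ∫ s in (0:ℝ)..t, (V 1 s + V 2 s) := by
          simp_rw [hg0]
          exact intervalIntegral.integral_const_mul _ _
        show (2:ℝ)⁻¹ ^ (0 + 1) * V 1 t ≤ 3 * K * ∫ s in (0:ℝ)..t, g 0 s
        rw [this, pow_one]
        calc (2:ℝ)⁻¹ * V 1 t ≤ 2⁻¹ * (3 * K * ∫ s in (0:ℝ)..t, (V 1 s + V 2 s)) :=
              mul_le_mul_of_nonneg_left hV1 (by norm_num)
          _ = 3 * K * (2⁻¹ * ∫ s in (0:ℝ)..t, (V 1 s + V 2 s)) := by ring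
    | succ n =>
        have hVn := hl (n + 2) (by omega) t ht
        have hsub : (n + 2 : ℕ) - 1 = n + 1 := rfl
        rw [hsub] at hVn
        have hgn : ∀ s : ℝ, g (n + 1) s
            = (2:ℝ)⁻¹ ^ (n + 2) * (V (n + 1) s + V (n + 2) s + V (n + 3) s) := by
          intro s; simp only [hgdef]
          have : (n + 1 : ℕ) ≠ 0 := Nat.succ_ne_zero n
          simp [this]
        have hint : (∫ s in (0:ℝ)..t, g (n+1) s)
            = (2:ℝ)⁻¹ ^ (n + 2) * ∫ s in (0:ℝ)..t, (V (n+1) s + V (n+2) s + V (n+3) s) := by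
          simp_rw [hgn]
          exact intervalIntegral.integral_const_mul _ _
        show (2:ℝ)⁻¹ ^ (n + 1 + 1) * V (n + 1 + 1) t ≤ 3 * K * ∫ s in (0:ℝ)..t, g (n+1) s
        rw [hint]
        have h2 : (2:ℝ)⁻¹ ^ (n + 1 + 1) * V (n + 2) t
            ≤ (2:ℝ)⁻¹ ^ (n + 2) * (3 * K * ∫ s in (0:ℝ)..t, (V (n+1) s + V (n+2) s + V (n+3) s)) := by
          exact mul_le_mul_of_nonneg_left hVn (by positivity)
        calc (2:ℝ)⁻¹ ^ (n + 1 + 1) * V (n + 1 + 1) t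
            ≤ (2:ℝ)⁻¹ ^ (n + 2) * (3 * K * ∫ s in (0:ℝ)..t, (V (n+1) s + V (n+2) s + V (n+3) s)) := h2
          _ = 3 * K * ((2:ℝ)⁻¹ ^ (n + 2) * ∫ s in (0:ℝ)..t, (V (n+1) s + V (n+2) s + V (n+3) s)) := by ring
  -- integrability of each g ℓ
  have hmg : ∀ ℓ : ℕ, Measurable (g ℓ) := by
    intro ℓ
    cases ℓ with
    | zero =>
        simp only [hgdef]
        exact (measurable_const.mul (((measurable_const.add (hmeas 1 le_rfl)).add (hmeas 2 (by omega)))))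
    | succ n =>
        simp only [hgdef]
        have : (n + 1 : ℕ) ≠ 0 := Nat.succ_ne_zero n
        simp only [this, if_false]
        exact measurable_const.mul (((hmeas (n+1) (by omega)).add (hmeas (n+2) (by omega))).add
          (hmeas (n+3) (by omega)))
  have hig : ∀ ℓ : ℕ, IntervalIntegrable (g ℓ) volume 0 t := by
    intro ℓ
    refine cg_intInt ht ((hmg ℓ).aestronglyMeasurable) (C := 6 * (2:ℝ)⁻¹ ^ (ℓ + 1)) ?_
    intro s hs
    rw [Real.norm_of_nonneg (hgnn ℓ s hs.1.le)]
    exact hgle ℓ s hs.1.le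
  -- integrability of S
  have hmG : Measurable fun s : ℝ => (∑' ℓ : ℕ, ENNReal.ofReal (W ℓ s)).toReal := by
    apply Measurable.ennreal_toReal
    apply Measurable.ennreal_tsum
    intro ℓ
    exact (measurable_const.mul (hmeas (ℓ+1) (by omega))).ennreal_ofReal
  have hSmeas : AEStronglyMeasurable S (volume.restrict (Set.Ioc (0:ℝ) t)) := by
    refine (hmG.aestronglyMeasurable).congr ?_
    refine (ae_restrict_iff' measurableSet_Ioc).2 (ae_of_all _ ?_)
    intro s hs
    have hs0 : (0:ℝ) ≤ s := hs.1.le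
    show (∑' ℓ : ℕ, ENNReal.ofReal (W ℓ s)).toReal = S s
    rw [← ENNReal.ofReal_tsum_of_nonneg (fun ℓ => hWnn ℓ s hs0) (hsumW s hs0)]
    exact ENNReal.toReal_ofReal (hSnn s hs0)
  have hiS : IntervalIntegrable S volume 0 t := by
    refine cg_intInt ht hSmeas (C := ∑' ℓ : ℕ, 2 * (2:ℝ)⁻¹ ^ (ℓ + 1)) ?_
    intro s hs
    rw [Real.norm_of_nonneg (hSnn s hs.1.le)]
    exact Summable.tsum_le_tsum (fun ℓ => hWle ℓ s hs.1.le) (hsumW s hs.1.le) (hgeo.mul_left 2)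
  -- summability of the integrals
  have hInn : ∀ ℓ : ℕ, 0 ≤ ∫ s in (0:ℝ)..t, g ℓ s := fun ℓ =>
    intervalIntegral.integral_nonneg ht (fun s hs => hgnn ℓ s hs.1)
  have hIle : ∀ ℓ : ℕ, (∫ s in (0:ℝ)..t, g ℓ s) ≤ t * (6 * (2:ℝ)⁻¹ ^ (ℓ + 1)) := by
    intro ℓ
    calc (∫ s in (0:ℝ)..t, g ℓ s) ≤ ∫ _s in (0:ℝ)..t, (6 * (2:ℝ)⁻¹ ^ (ℓ + 1)) :=
          intervalIntegral.integral_mono_on ht (hig ℓ) intervalIntegrable_const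
            (fun s hs => hgle ℓ s hs.1)
      _ = t * (6 * (2:ℝ)⁻¹ ^ (ℓ + 1)) := by
          rw [intervalIntegral.integral_const, smul_eq_mul, sub_zero]
  have hsumI : Summable (fun ℓ : ℕ => ∫ s in (0:ℝ)..t, g ℓ s) := by
    refine Summable.of_nonneg_of_le hInn hIle ?_
    simpa [mul_assoc] using (hgeo.mul_left 6).mul_left t
  -- interchange (as inequality)
  have hkey : (∑' ℓ : ℕ, ∫ s in (0:ℝ)..t, g ℓ s) ≤ ∫ s in (0:ℝ)..t, 7/2 * S s := by
    refine Summable.tsum_le_of_sum_le hsumI ?_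
    intro F
    have hfs : (∑ ℓ ∈ F, ∫ s in (0:ℝ)..t, g ℓ s) = ∫ s in (0:ℝ)..t, ∑ ℓ ∈ F, g ℓ s :=
      (intervalIntegral.integral_finset_sum (fun i _ => hig i)).symm
    rw [hfs]
    refine intervalIntegral.integral_mono_on ht ?_ (hiS.const_mul (7/2)) ?_
    · have hsum := IntervalIntegrable.sum F (fun i _ => hig i)
      have heq : (∑ i ∈ F, g i) = fun s => ∑ ℓ ∈ F, g ℓ s := by
        funext s; simp [Finset.sum_apply]
      rwa [heq] at hsum
    · intro s hs
      have hs0 : (0:ℝ) ≤ s := hs.1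
      calc (∑ ℓ ∈ F, g ℓ s) ≤ ∑' ℓ : ℕ, g ℓ s :=
            Summable.sum_le_tsum F (fun i _ => hgnn i s hs0) (hsumg s hs0)
        _ ≤ 7/2 * S s := hgS s hs0
  have hintnn : 0 ≤ ∫ s in (0:ℝ)..t, S s :=
    intervalIntegral.integral_nonneg ht (fun s hs => hSnn s hs.1)
  -- assemble
  calc S t = ∑' ℓ : ℕ, W ℓ t := rfl
    _ ≤ ∑' ℓ : ℕ, 3 * K * ∫ s in (0:ℝ)..t, g ℓ s :=
        Summable.tsum_le_tsum hWt (hsumW t ht) (hsumI.mul_left (3 * K))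
    _ = 3 * K * ∑' ℓ : ℕ, ∫ s in (0:ℝ)..t, g ℓ s := tsum_mul_left
    _ ≤ 3 * K * ∫ s in (0:ℝ)..t, 7/2 * S s :=
        mul_le_mul_of_nonneg_left hkey (by positivity)
    _ = 3 * K * (7/2 * ∫ s in (0:ℝ)..t, S s) := by
        rw [intervalIntegral.integral_const_mul]
    _ ≤ 12 * K * ∫ s in (0:ℝ)..t, S s := by nlinarith
end

section
/- Let \((\Omega, \mathcal{F}, \mathbb{P})\) be a probability space, \(\mathcal{G}_c, \mathcal{G}_f \subset \mathcal{F}\) sub-\(\sigma\)-algebras, and \(A \in \mathcal{G}_c \cap \mathcal{G}_f\) a set such that \(\mathcal{G}_c \wedge A \subset \mathcal{G}_f \wedge A\), where \(\mathcal{G} \wedge A = \{A \cap B : B \in \mathcal{G}\}\) denotes the trace \(\sigma\)-algebra. Then for every integrable random variable \(X\), almost surely \(\mathbf{1}_A\, \mathbb{E}[X \mid \mathcal{G}_c] = \mathbf{1}_A\, \mathbb{E}[\mathbb{E}[X \mid \mathcal{G}_f] \mid \mathcal{G}_c]\). -/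
/-!
Both sides are `Gc`-measurable, so it suffices to compare their integrals over `Gc`-measurable
sets `s`. The indicator turns these into integrals over `s ∩ A`, which by the trace hypothesis is
measurable for `Gf` as well as for `Gc`; the defining property of both conditional expectations
then makes each integral equal to `∫ x in s ∩ A, X x ∂μ`.
-/

open MeasureTheory

section

variable {Ω : Type*} {m₁ m₂ m0 : MeasurableSpace Ω} {μ : Measure Ω}

lemma setIntegral_condExp_condExp_of_measurableSet (hm₁ : m₁ ≤ m0) (hm₂ : m₂ ≤ m0)
    [SigmaFinite (μ.trim hm₁)] [SigmaFinite (μ.trim hm₂)] {f : Ω → ℝ} (hf : Integrable f μ)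
    {s : Set Ω} (hs₁ : MeasurableSet[m₁] s) (hs₂ : MeasurableSet[m₂] s) :
    ∫ x in s, μ[μ[f | m₂] | m₁] x ∂μ = ∫ x in s, μ[f | m₁] x ∂μ := by
  rw [setIntegral_condExp hm₁ integrable_condExp hs₁, setIntegral_condExp hm₂ hf hs₂,
    setIntegral_condExp hm₁ hf hs₁]

theorem indicator_condExp_ae_eq_indicator_condExp_condExp (hm₁ : m₁ ≤ m0) (hm₂ : m₂ ≤ m0)
    [SigmaFinite (μ.trim hm₁)] [SigmaFinite (μ.trim hm₂)] {A : Set Ω}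
    (hA : MeasurableSet[m₁] A) (htrace : ∀ s, MeasurableSet[m₁] s → MeasurableSet[m₂] (s ∩ A))
    {f : Ω → ℝ} (hf : Integrable f μ) :
    A.indicator (μ[f | m₁]) =ᵐ[μ] A.indicator (μ[μ[f | m₂] | m₁]) := by
  have hA₀ : MeasurableSet A := hm₁ A hA
  have hmeas (g : Ω → ℝ) : AEStronglyMeasurable[m₁] (A.indicator (μ[g | m₁])) μ :=
    (stronglyMeasurable_condExp.indicator hA).aestronglyMeasurable
  have hint (g : Ω → ℝ) (s : Set Ω) : IntegrableOn (A.indicator (μ[g | m₁])) s μ :=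
    (integrable_condExp.indicator hA₀).integrableOn
  refine ae_eq_of_forall_setIntegral_eq_of_sigmaFinite' hm₁ (fun s _ _ => hint _ s)
    (fun s _ _ => hint _ s) (fun s hs _ => ?_) (hmeas _) (hmeas _)
  rw [setIntegral_indicator hA₀, setIntegral_indicator hA₀,
    setIntegral_condExp_condExp_of_measurableSet hm₁ hm₂ hf (hs.inter hA) (htrace s hs)]

end

/-- Localized tower property for conditional expectation: if `A ∈ 𝒢_c ∩ 𝒢_f` and the
trace of `𝒢_c` on `A` is contained in the trace of `𝒢_f` on `A`, then for every
integrable `X`, almost surely `1_A 𝔼[X | 𝒢_c] = 1_A 𝔼[𝔼[X | 𝒢_f] | 𝒢_c]`. -/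
theorem localized_tower_property {Ω : Type*} {m0 : MeasurableSpace Ω}
    (μ : Measure Ω) [IsProbabilityMeasure μ]
    (Gc Gf : MeasurableSpace Ω) (hGc : Gc ≤ m0) (hGf : Gf ≤ m0)
    (A : Set Ω) (hAc : MeasurableSet[Gc] A) (hAf : MeasurableSet[Gf] A)
    (htrace : ∀ B : Set Ω, MeasurableSet[Gc] B →
      ∃ B' : Set Ω, MeasurableSet[Gf] B' ∧ A ∩ B = A ∩ B')
    (X : Ω → ℝ) (hX : Integrable X μ) :
    A.indicator (μ[X | Gc]) =ᵐ[μ] A.indicator (μ[μ[X | Gf] | Gc]) := by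
  refine indicator_condExp_ae_eq_indicator_condExp_condExp hGc hGf hAc (fun s hs => ?_) hX
  obtain ⟨B', hB', hAs⟩ := htrace s hs
  rw [Set.inter_comm, hAs]
  exact hAf.inter hB'
end
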